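/- arXiv:0904.2354 — 4 statements merged into one kernel-verified Lean document; each statement's English description precedes it below -/
import Mathlib

section
/- Let F be a finite extension of ℚ_p with p odd, so that ℤ_p embeds canonically in the valuation ring O of F, and let λ be a nontrivial continuous character of the additive group of F. Let s ∈ ℤ_p× and let σ be a field automorphism of ℂ such that σ(z) = z^r whenever z is a value of λ satisfying z^{p^n} = 1 and r is an integer with r ≡ s (mod p^n ℤ_p). Then σ(λ(t)) = λ(s t) for every t ∈ F, i.e. σ ∘ λ = λ[s]. -/
/-!
For fixed `t`, `ψ a := λ (a t)` is a continuous unitary character of `ℤ_p`. By continuity it maps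
some `p^n ℤ_p` into the half-plane `Re > 0`, and since the unit circle has no nontrivial subgroup
inside that half-plane, `ψ` is trivial on `p^n ℤ_p`. Hence `λ t = ψ 1` is a `p^n`-th root of unity,
and for an integer `r ≡ s (mod p^n)` we get `σ (λ t) = ψ 1 ^ r = ψ r = ψ s = λ (s t)`.
-/

open Topology Real

namespace Complex

theorem eq_one_of_forall_re_pow_pos {z : ℂ} (hz : ‖z‖ = 1) (h : ∀ m : ℕ, 0 < (z ^ m).re) :
    z = 1 := by
  have hexp : z = exp (z.arg * I) := by
    simpa [hz] using (norm_mul_exp_arg_mul_I z).symm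
  by_contra hne
  set θ := |z.arg|
  have hθ : 0 < θ := abs_pos.mpr fun h0 ↦ hne (by rw [hexp, h0]; simp)
  -- the first multiple of `θ` that reaches `π / 2` lies in `[π / 2, 3π / 2]`
  set m := ⌈π / (2 * θ)⌉₊
  have hπ : π / (2 * θ) * θ = π / 2 := by field_simp
  have hm_ge : π / 2 ≤ m * θ :=
    hπ ▸ mul_le_mul_of_nonneg_right (Nat.le_ceil _) hθ.le
  have hm_le : m * θ ≤ π + π / 2 := by
    have := mul_lt_mul_of_pos_right (Nat.ceil_lt_add_one (by positivity : 0 ≤ π / (2 * θ))) hθ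
    linarith [abs_arg_le_pi z]
  have hre : (z ^ m).re = Real.cos (m * θ) := by
    rw [hexp, ← exp_nat_mul, ← mul_assoc, ← ofReal_natCast, ← ofReal_mul, exp_ofReal_mul_I_re,
      ← Real.cos_abs, abs_mul, Nat.abs_cast]
  exact (h m).not_ge (hre ▸ Real.cos_nonpos_of_pi_div_two_le_of_le hm_ge hm_le)

end Complex

namespace PadicInt
variable {p : ℕ} [Fact p.Prime]

theorem exists_span_pow_subset_of_mem_nhds {U : Set ℤ_[p]} (hU : U ∈ 𝓝 0) :
    ∃ n : ℕ, (Ideal.span {(p : ℤ_[p]) ^ n} : Set ℤ_[p]) ⊆ U := by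
  obtain ⟨ε, hε, hball⟩ := Metric.mem_nhds_iff.mp hU
  obtain ⟨n, hn⟩ := exists_pow_lt_of_lt_one hε
    (inv_lt_one_of_one_lt₀ (by exact_mod_cast (Fact.out : p.Prime).one_lt : (1 : ℝ) < p))
  refine ⟨n, fun x hx ↦ hball (mem_ball_zero_iff.mpr ?_)⟩
  calc ‖x‖ ≤ (p : ℝ) ^ (-n : ℤ) := (norm_le_pow_iff_mem_span_pow x n).mpr hx
    _ < ε := by rwa [zpow_neg, zpow_natCast, ← inv_pow]

end PadicInt

namespace AddChar
variable {p : ℕ} [Fact p.Prime]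

theorem exists_eq_one_on_span_pow {ψ : AddChar ℤ_[p] ℂ} (hψ : Continuous ψ)
    (habs : ∀ a, ‖ψ a‖ = 1) :
    ∃ n : ℕ, ∀ a ∈ Ideal.span {(p : ℤ_[p]) ^ n}, ψ a = 1 := by
  have hU : ψ ⁻¹' {w | 0 < w.re} ∈ 𝓝 0 :=
    hψ.continuousAt.preimage_mem_nhds <|
      (isOpen_lt continuous_const Complex.continuous_re).mem_nhds (by simp)
  obtain ⟨n, hn⟩ := PadicInt.exists_span_pow_subset_of_mem_nhds hU
  refine ⟨n, fun a ha ↦ Complex.eq_one_of_forall_re_pow_pos (habs a) fun m ↦ ?_⟩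
  rw [← map_nsmul_eq_pow]
  exact hn (Submodule.smul_of_tower_mem _ m ha)

theorem apply_eq_pow_appr {M : Type*} [Monoid M] {ψ : AddChar ℤ_[p] M} {n : ℕ}
    (hψ : ∀ a ∈ Ideal.span {(p : ℤ_[p]) ^ n}, ψ a = 1) (a : ℤ_[p]) :
    ψ a = ψ 1 ^ a.appr n := by
  rw [← map_nsmul_eq_pow, nsmul_one, ← mul_one (ψ (a.appr n)), ← hψ _ (a.appr_spec n),
    ← map_add_eq_mul, add_sub_cancel]

end AddChar

theorem galois_action_on_character_eq_scaled_character_general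
    (p : ℕ) [Fact p.Prime]
    (F : Type*) [NormedField F] [NormedAlgebra ℚ_[p] F]
    (lam : AddChar F ℂ) (hcont : Continuous ⇑lam)
    (habs : ∀ x : F, ‖lam x‖ = 1)
    (s : ℤ_[p]ˣ) (σ : ℂ ≃+* ℂ)
    (hσ : ∀ (z : ℂ) (n : ℕ) (r : ℤ), z ∈ Set.range ⇑lam → z ^ (p ^ n) = 1 →
      ((r : ℤ_[p]) - ((s : ℤ_[p]ˣ) : ℤ_[p])) ∈ Ideal.span {((p : ℤ_[p]) ^ n)} →
      σ z = z ^ r) :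
    ∀ t : F, σ (lam t) = lam ((algebraMap ℚ_[p] F (((s : ℤ_[p]ˣ) : ℤ_[p]) : ℚ_[p])) * t) := by
  intro t
  let ψ : AddChar ℤ_[p] ℂ := lam.compAddMonoidHom <| (AddMonoidHom.mulRight t).comp
    ((algebraMap ℚ_[p] F).toAddMonoidHom.comp PadicInt.Coe.ringHom.toAddMonoidHom)
  have hψ : ∀ a, ψ a = lam (algebraMap ℚ_[p] F a * t) := fun _ ↦ rfl
  have hψ_cont : Continuous ψ :=
    hcont.comp (by fun_prop : Continuous fun a : ℤ_[p] ↦ algebraMap ℚ_[p] F a * t)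
  obtain ⟨n, hn⟩ := ψ.exists_eq_one_on_span_pow hψ_cont fun _ ↦ habs _
  have hroot : ψ 1 ^ p ^ n = 1 := by
    rw [← AddChar.map_nsmul_eq_pow, nsmul_one]
    exact hn _ (by simp)
  have happr : (((s : ℤ_[p]).appr n : ℤ) : ℤ_[p]) - s ∈ Ideal.span {(p : ℤ_[p]) ^ n} := by
    simpa using neg_mem ((s : ℤ_[p]).appr_spec n)
  calc σ (lam t) = σ (ψ 1) := by simp [hψ]
    _ = ψ 1 ^ ((s : ℤ_[p]).appr n : ℤ) := hσ _ n _ ⟨_, rfl⟩ hroot happr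
    _ = ψ s := by rw [zpow_natCast, ← ψ.apply_eq_pow_appr hn]

/-- Let `F` be a finite extension of `ℚ_p`, `p` odd, and `λ` a
nontrivial continuous unitary character of `F⁺`.  Let `s ∈ ℤ_p×` and let `σ` be a field
automorphism of `ℂ` such that `σ z = z ^ r` whenever `z` is a value of `λ` with
`z ^ (p ^ n) = 1` and `r` is an integer with `r ≡ s (mod p^n ℤ_p)`.  Then
`σ (λ t) = λ (s t)` for all `t ∈ F`, i.e. `σ ∘ λ = λ[s]`. -/
theorem galois_action_on_character_eq_scaled_character
    (p : ℕ) [Fact p.Prime] (hodd : Odd p)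
    (F : Type*) [NormedField F] [NormedAlgebra ℚ_[p] F] [FiniteDimensional ℚ_[p] F]
    (lam : AddChar F ℂ) (hcont : Continuous ⇑lam)
    (habs : ∀ x : F, ‖lam x‖ = 1)
    (hnontriv : ∃ x : F, lam x ≠ 1)
    (s : ℤ_[p]ˣ) (σ : ℂ ≃+* ℂ)
    (hσ : ∀ (z : ℂ) (n : ℕ) (r : ℤ), z ∈ Set.range ⇑lam → z ^ (p ^ n) = 1 →
      ((r : ℤ_[p]) - ((s : ℤ_[p]ˣ) : ℤ_[p])) ∈ Ideal.span {((p : ℤ_[p]) ^ n)} →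
      σ z = z ^ r) :
    ∀ t : F, σ (lam t) = lam ((algebraMap ℚ_[p] F (((s : ℤ_[p]ˣ) : ℤ_[p]) : ℚ_[p])) * t) :=
  galois_action_on_character_eq_scaled_character_general p F lam hcont habs s σ hσ
end

section
/- (Galois descent for smooth semilinear actions) Let K/k be a Galois field extension with Galois group G = Gal(K/k) carrying the Krull topology, and let M be a K-vector space equipped with an action ρ of G by additive bijections satisfying: ρ(στ) = ρ(σ)∘ρ(τ), ρ(1) = id, and ρ(σ)(c·m) = σ(c)·ρ(σ)(m) for all σ,τ ∈ G, c ∈ K, m ∈ M (semilinearity); assume moreover the action is smooth, i.e. for each m ∈ M the stabilizer {σ ∈ G : ρ(σ)(m) = m} is open in G. Then, writing M^G = {m ∈ M : ρ(σ)(m) = m for all σ ∈ G}, which is a k-subspace of M, the canonical K-linear map K ⊗_k M^G → M sending c ⊗ m to c·m is bijective. -/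
/-!
Injectivity: a `k`-basis of the invariants `M^G` stays `K`-linearly independent. A shortest
`K`-linear relation among invariant vectors, normalised to have one coefficient `1`, is mapped
by each `ρ σ` to a relation whose difference with the original one is shorter, hence zero; so
the coefficients are Galois invariant, i.e. lie in `k`.

Surjectivity: by smoothness a vector `m` is fixed by the fixing subgroup of a finite extension
`L/k` inside `K`, so `ρ σ m` only depends on the embedding `σ|_L : L → K`; call it `Φ (σ|_L)`.
For `c ∈ L` the vector `∑ φ, φ c • Φ φ` is invariant, and by Dedekind's independence of
characters the vectors `(φ c)_φ` span `K^(L →ₐ[k] K)`, so `m = Φ (L ↪ K)` is a `K`-linear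
combination of invariant vectors.
-/

open scoped TensorProduct

noncomputable def galoisDescentMap (k K M : Type*) [CommRing k] [CommRing K]
    [Algebra k K] [AddCommGroup M] [Module K M] [Module k M] [IsScalarTower k K M]
    (S : Submodule k M) : K ⊗[k] S →ₗ[k] M :=
  TensorProduct.lift
    { toFun := fun c => c • (S.subtype)
      map_add' := fun c d => by simp [add_smul]
      map_smul' := fun a c => by simp [smul_assoc] }

lemma span_range_eval_eq_top {ι X K : Type*} [Field K] [Fintype ι]
    {f : ι → X → K} (hf : LinearIndependent K f) :
    Submodule.span K (Set.range fun x i => f i x) = ⊤ := by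
  classical
  by_contra hW
  obtain ⟨φ, hφ, hmap⟩ :=
    Submodule.exists_dual_map_eq_bot_of_lt_top (lt_top_iff_ne_top.2 hW) inferInstance
  have hvanish (x : X) : φ (fun i => f i x) = 0 := by
    have hx : φ (fun i => f i x) ∈ (Submodule.span K (Set.range fun x i => f i x)).map φ :=
      Submodule.mem_map_of_mem (Submodule.subset_span ⟨x, rfl⟩)
    rwa [hmap, Submodule.mem_bot] at hx
  have hcoeff : ∀ i, φ (fun j => if i = j then 1 else 0) = 0 := by
    refine Fintype.linearIndependent_iff.mp hf _ (funext fun x => ?_)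
    have hx := hvanish x
    rw [LinearMap.pi_apply_eq_sum_univ φ] at hx
    simpa [Finset.sum_apply, mul_comm] using hx
  refine hφ (LinearMap.ext fun g => ?_)
  rw [LinearMap.pi_apply_eq_sum_univ φ g]
  simp [hcoeff]

lemma galoisDescentMap_eq_liftBaseChange {k K M : Type*} [CommRing k] [CommRing K]
    [Algebra k K] [AddCommGroup M] [Module K M] [Module k M] [IsScalarTower k K M]
    (S : Submodule k M) :
    galoisDescentMap k K M S = (S.subtype.liftBaseChange K).restrictScalars k :=
  TensorProduct.ext' fun _ _ => rfl

section SemilinearAction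

variable {k K M : Type*} [Field k] [Field K] [Algebra k K] [AddCommGroup M]
  (ρ : (K ≃ₐ[k] K) → M ≃+ M)

def semilinearInvariants [Module K M] [Module k M] [IsScalarTower k K M]
    (hsemi : ∀ (σ : K ≃ₐ[k] K) (c : K) (m : M), ρ σ (c • m) = σ c • ρ σ m) :
    Submodule k M where
  carrier := {m | ∀ σ, ρ σ m = m}
  add_mem' hx hy σ := by rw [map_add, hx σ, hy σ]
  zero_mem' σ := map_zero (ρ σ)
  smul_mem' a m hm σ := by rw [← algebraMap_smul K a m, hsemi, AlgEquiv.commutes, hm σ]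

variable {ρ}

theorem LinearIndependent.extendScalars_of_invariant [IsGalois k K]
    [Module K M] [Module k M] [IsScalarTower k K M]
    (hsemi : ∀ (σ : K ≃ₐ[k] K) (c : K) (m : M), ρ σ (c • m) = σ c • ρ σ m)
    {ι : Type*} {s : ι → M} (hs : LinearIndependent k s)
    (hfix : ∀ i σ, ρ σ (s i) = s i) : LinearIndependent K s := by
  classical
  rw [linearIndependent_iff']
  intro t
  induction t using Finset.strongInduction with
  | _ t ih =>
  intro g hg i₀ hi₀
  by_contra hgi₀
  set g' : ι → K := fun i => (g i₀)⁻¹ * g i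
  have hg'i₀ : g' i₀ = 1 := inv_mul_cancel₀ hgi₀
  have hg' : ∑ i ∈ t, g' i • s i = 0 := by
    simp only [g', mul_smul, ← Finset.smul_sum, hg, smul_zero]
  have hinv (τ : K ≃ₐ[k] K) : ∀ i ∈ t, τ (g' i) = g' i := by
    have hτ : ∑ i ∈ t, (τ (g' i) - g' i) • s i = 0 := by
      have := congrArg (ρ τ) hg'
      simp only [map_sum, map_zero, hsemi, hfix] at this
      simp only [sub_smul, Finset.sum_sub_distrib, this, hg', sub_zero]
    have herase :=
      ih (t.erase i₀) (Finset.erase_ssubset hi₀) (fun i => τ (g' i) - g' i) (by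
        rw [Finset.sum_erase]
        exacts [hτ, by simp [hg'i₀]])
    intro i hi
    rcases eq_or_ne i i₀ with rfl | hne
    · rw [hg'i₀, map_one]
    · exact sub_eq_zero.mp (herase i (Finset.mem_erase.2 ⟨hne, hi⟩))
  choose! a ha using fun i hi =>
    (InfiniteGalois.mem_range_algebraMap_iff_fixed (g' i)).2 (hinv · i hi)
  have ha_sum : ∑ i ∈ t, a i • s i = 0 := by
    rw [← hg']
    exact Finset.sum_congr rfl fun i hi => by rw [← ha i hi, algebraMap_smul]
  have ha₀ := linearIndependent_iff'.mp hs t a ha_sum i₀ hi₀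
  have : g' i₀ = 0 := by rw [← ha i₀ hi₀, ha₀, map_zero]
  exact one_ne_zero (hg'i₀.symm.trans this)

theorem mem_span_invariants_of_equivariant [Module K M]
    (hsemi : ∀ (σ : K ≃ₐ[k] K) (c : K) (m : M), ρ σ (c • m) = σ c • ρ σ m)
    {A : Type*} [Semiring A] [Algebra k A] [Fintype (A →ₐ[k] K)] (Φ : (A →ₐ[k] K) → M)
    (hΦ : ∀ τ φ, ρ τ (Φ φ) = Φ ((τ : K →ₐ[k] K).comp φ)) (φ : A →ₐ[k] K) :
    Φ φ ∈ Submodule.span K {m | ∀ σ, ρ σ m = m} := by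
  classical
  set P := Fintype.linearCombination K Φ
  have hinv (a : A) (σ : K ≃ₐ[k] K) : ρ σ (P fun ψ => ψ a) = P fun ψ => ψ a := by
    simp only [P, Fintype.linearCombination_apply, map_sum, hsemi, hΦ]
    exact Equiv.sum_comp (AlgEquiv.arrowCongr AlgEquiv.refl σ) fun ψ => ψ a • Φ ψ
  have hdedekind : LinearIndependent K fun ψ : A →ₐ[k] K => (ψ : A → K) :=
    (linearIndependent_monoidHom A K).comp (fun ψ : A →ₐ[k] K => (ψ : A →* K))
      fun _ _ h => AlgHom.ext (DFunLike.congr_fun h :)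
  have hsingle : Pi.single φ 1 ∈ Submodule.span K (Set.range fun a ψ => ψ a) := by
    rw [span_range_eval_eq_top hdedekind]
    trivial
  have hΦφ : Φ φ = P (Pi.single φ 1) := by
    simp [P, Fintype.linearCombination_apply, Pi.single_apply]
  rw [hΦφ]
  refine Submodule.span_le.2 ?_ (Submodule.map_span P _ ▸ Submodule.mem_map_of_mem hsingle)
  rintro _ ⟨_, ⟨a, rfl⟩, rfl⟩
  exact Submodule.subset_span (hinv a)

theorem exists_equivariant_of_forall_mem_fixingSubgroup [Normal k K]
    (hone : ρ 1 = AddEquiv.refl M) (hmul : ∀ (σ τ : K ≃ₐ[k] K) (m : M), ρ (σ * τ) m = ρ σ (ρ τ m))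
    (L : IntermediateField k K) {m : M} (hm : ∀ τ ∈ L.fixingSubgroup, ρ τ m = m) :
    ∃ Φ : (L →ₐ[k] K) → M, (∀ τ φ, ρ τ (Φ φ) = Φ ((τ : K →ₐ[k] K).comp φ)) ∧ Φ L.val = m := by
  have hagree (τ₁ τ₂ : K ≃ₐ[k] K) (h : ∀ x ∈ L, τ₁ x = τ₂ x) : ρ τ₁ m = ρ τ₂ m := by
    have : τ₂⁻¹ * τ₁ ∈ L.fixingSubgroup :=
      (IntermediateField.mem_fixingSubgroup_iff _ _).2 fun x hx => by
        simp [AlgEquiv.mul_apply, h x hx]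
    rw [← mul_inv_cancel_left τ₂ τ₁, hmul, hm _ this]
  have hext (φ : L →ₐ[k] K) : ∃ σ : K ≃ₐ[k] K, ∀ x : L, σ x = φ x :=
    ⟨AlgEquiv.ofBijective (φ.liftNormal K) (AlgHom.normal_bijective k K K _),
      φ.liftNormal_commutes K⟩
  choose extend hextend using hext
  refine ⟨fun φ => ρ (extend φ) m, fun τ φ => ?_, ?_⟩
  · rw [← hmul]
    exact hagree _ _ fun x hx => by simp [AlgEquiv.mul_apply, hextend _ ⟨x, hx⟩]
  · show ρ (extend L.val) m = m
    rw [hagree (extend L.val) 1 fun x hx => hextend _ ⟨x, hx⟩, hone]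
    rfl

theorem mem_span_invariants_of_isOpen_stabilizer [IsGalois k K] [Module K M]
    (hone : ρ 1 = AddEquiv.refl M) (hmul : ∀ (σ τ : K ≃ₐ[k] K) (m : M), ρ (σ * τ) m = ρ σ (ρ τ m))
    (hsemi : ∀ (σ : K ≃ₐ[k] K) (c : K) (m : M), ρ σ (c • m) = σ c • ρ σ m)
    {m : M} (hm : IsOpen {σ : K ≃ₐ[k] K | ρ σ m = m}) :
    m ∈ Submodule.span K {m | ∀ σ, ρ σ m = m} := by
  obtain ⟨L, _, hL⟩ := (krullTopology_mem_nhds_one_iff k K _).1 (hm.mem_nhds (by simp [hone]))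
  obtain ⟨Φ, hΦ, rfl⟩ := exists_equivariant_of_forall_mem_fixingSubgroup hone hmul L hL
  exact mem_span_invariants_of_equivariant hsemi Φ hΦ L.val

end SemilinearAction

/-- **Galois descent for smooth semilinear actions.** Let `K/k` be a
Galois extension with Galois group `G` (with the Krull topology) and `M` a `K`-vector
space with a smooth semilinear `G`-action `ρ`.  Then the fixed points `M^G` form a
`k`-subspace of `M`, and the canonical `K`-linear map `K ⊗_k M^G → M`, `c ⊗ m ↦ c • m`,
is bijective. -/
theorem galois_descent_bijective
    (k K : Type*) [Field k] [Field K] [Algebra k K] [IsGalois k K]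
    (M : Type*) [AddCommGroup M] [Module K M] [Module k M] [IsScalarTower k K M]
    (ρ : (K ≃ₐ[k] K) → M ≃+ M)
    (hone : ρ 1 = AddEquiv.refl M)
    (hmul : ∀ (σ τ : K ≃ₐ[k] K) (m : M), ρ (σ * τ) m = ρ σ (ρ τ m))
    (hsemi : ∀ (σ : K ≃ₐ[k] K) (c : K) (m : M), ρ σ (c • m) = σ c • ρ σ m)
    (hsmooth : ∀ m : M, IsOpen {σ : K ≃ₐ[k] K | ρ σ m = m}) :
    ∃ S : Submodule k M, (S : Set M) = {m : M | ∀ σ : K ≃ₐ[k] K, ρ σ m = m} ∧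
      Function.Bijective (galoisDescentMap k K M S) := by
  set S := semilinearInvariants ρ hsemi
  refine ⟨S, rfl, ?_⟩
  rw [galoisDescentMap_eq_liftBaseChange, LinearMap.coe_restrictScalars]
  set b := Module.Basis.ofVectorSpace k S
  constructor
  · refine LinearMap.injective_of_linearIndependent (Algebra.TensorProduct.basis K b).span_eq ?_
    have hbasis :
        S.subtype.liftBaseChange K ∘ Algebra.TensorProduct.basis K b = S.subtype ∘ b := by
      ext
      simp [Algebra.TensorProduct.basis_apply]
    rw [hbasis]
    exact (b.linearIndependent.map' S.subtype S.ker_subtype).extendScalars_of_invariant hsemi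
      fun i σ => (b i).2 σ
  · rw [← LinearMap.range_eq_top, LinearMap.range_liftBaseChange, Submodule.range_subtype,
      eq_top_iff]
    exact fun m _ => mem_span_invariants_of_isOpen_stabilizer hone hmul hsemi (hsmooth m)
end

section
/- (Triviality of smooth 1-cocycles) Let K/k be a Galois field extension with Galois group G = Gal(K/k) carrying the Krull topology, and let M be a K-vector space with a smooth semilinear action ρ of G (ρ(στ)=ρ(σ)ρ(τ), ρ(1)=id, ρ(σ)(c·m)=σ(c)·ρ(σ)(m), all stabilizers open). For a K-linear automorphism T of M write ^σT = ρ(σ)∘T∘ρ(σ)^{−1}. Let δ : G → GL_K(M) be a 1-cocycle, i.e. δ(στ) = δ(σ) ∘ ^σδ(τ) for all σ,τ ∈ G, and assume the twisted action (σ, m) ↦ δ(σ)(ρ(σ)(m)) is smooth, i.e. for each m ∈ M there is an open subgroup of G on which δ(σ)(ρ(σ)(m)) = m. Then there exists α ∈ GL_K(M) such that δ(σ) = α^{−1} ∘ (^σα) for every σ ∈ G. -/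
/-!
Every vector `m` of a smooth semilinear representation lies in the `K`-span of the invariant
vectors: if the fixing group `H` of a finite subextension `E` fixes `m`, then for `c ∈ E` the sums
`∑_{σH} σ(c • m)` over the finitely many cosets are invariant, and since the restrictions `σ|_E`
are linearly independent characters (Dedekind), `m` is a `K`-combination of these sums. So `M`
has a basis of invariant vectors, and any two smooth semilinear actions on `M` are intertwined by
a `K`-linear automorphism. The cocycle condition says precisely that `σ ↦ δ σ ∘ ρ σ` is a second
such action, and an automorphism `α` intertwining it with `ρ` is the required coboundary.
-/

open IntermediateField Submodule

section LinearAlgebra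

variable {K : Type*} [Field K]

theorem span_range_eval_eq_top_of_linearIndependent {ι X : Type*} [Fintype ι] {f : ι → X → K}
    (hf : LinearIndependent K f) : span K (Set.range fun x i => f i x) = ⊤ := by
  classical
  rw [← dualAnnihilator_eq_bot_iff, eq_bot_iff]
  intro φ hφ
  rw [mem_dualAnnihilator] at hφ
  have hcoeff : ∀ i, φ (fun j => if i = j then 1 else 0) = 0 := by
    refine Fintype.linearIndependent_iff.mp hf _ (funext fun x => ?_)
    have hx : φ (fun i => f i x) = 0 := hφ _ (subset_span ⟨x, rfl⟩)
    rw [LinearMap.pi_apply_eq_sum_univ] at hx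
    simpa [mul_comm] using hx
  exact LinearMap.ext fun v => by simp [LinearMap.pi_apply_eq_sum_univ φ v, hcoeff]

theorem mem_span_range_sum_smul_of_linearIndependent {ι X M : Type*} [Fintype ι]
    [AddCommGroup M] [Module K M] {χ : ι → X → K} (hχ : LinearIndependent K χ) (w : ι → M)
    (i : ι) : w i ∈ span K (Set.range fun x => ∑ j, χ j x • w j) := by
  classical
  have hsingle : Pi.single i 1 ∈ span K (Set.range fun x j => χ j x) := by
    simp [span_range_eval_eq_top_of_linearIndependent hχ]
  have := mem_map_of_mem (f := Fintype.linearCombination K w) hsingle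
  rwa [Fintype.linearCombination_apply_single, one_smul, map_span, ← Set.range_comp] at this

end LinearAlgebra

section Galois

variable {k K : Type*} [Field k] [Field K] [Algebra k K]

theorem IntermediateField.injective_restrict_quotient_out (E : IntermediateField k K) :
    Function.Injective fun q : (K ≃ₐ[k] K) ⧸ E.fixingSubgroup =>
      (q.out : K ≃ₐ[k] K).toAlgHom.comp E.val := by
  intro q q' h
  rw [← QuotientGroup.out_eq' q, ← QuotientGroup.out_eq' q', QuotientGroup.eq,
    mem_fixingSubgroup_iff]
  intro c hc
  have := congrArg (fun f : E →ₐ[k] K => f ⟨c, hc⟩) h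
  simp only [AlgHom.comp_apply, coe_val, AlgEquiv.coe_toAlgHom] at this
  rw [AlgEquiv.mul_apply, ← this]
  exact AlgEquiv.symm_apply_apply _ _

instance IntermediateField.finite_quotient_fixingSubgroup (E : IntermediateField k K)
    [FiniteDimensional k E] : Finite ((K ≃ₐ[k] K) ⧸ E.fixingSubgroup) :=
  Finite.of_injective (fun q : (K ≃ₐ[k] K) ⧸ E.fixingSubgroup =>
      (q.out : K ≃ₐ[k] K).toAlgHom.comp E.val) E.injective_restrict_quotient_out

theorem IntermediateField.linearIndependent_quotient_out (E : IntermediateField k K) :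
    LinearIndependent K fun (q : (K ≃ₐ[k] K) ⧸ E.fixingSubgroup) (c : E) => q.out (c : K) := by
  let χ : (K ≃ₐ[k] K) ⧸ E.fixingSubgroup → (E →* K) := fun q =>
    ((q.out : K ≃ₐ[k] K).toAlgHom.comp E.val).toRingHom.toMonoidHom
  have hχ : Function.Injective χ := fun _ _ h =>
    E.injective_restrict_quotient_out (AlgHom.ext fun c => DFunLike.congr_fun h c)
  exact (linearIndependent_monoidHom E K).comp χ hχ

end Galois

structure IsSmoothSemilinearAction {k K M : Type*} [Field k] [Field K] [Algebra k K]
    [AddCommGroup M] [Module K M] (ρ : (K ≃ₐ[k] K) → M ≃+ M) : Prop where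
  map_one : ρ 1 = AddEquiv.refl M
  map_mul : ∀ σ τ m, ρ (σ * τ) m = ρ σ (ρ τ m)
  map_smul : ∀ σ (c : K) m, ρ σ (c • m) = σ c • ρ σ m
  isOpen_stabilizer : ∀ m, IsOpen {σ | ρ σ m = m}

namespace IsSmoothSemilinearAction

variable {k K M : Type*} [Field k] [Field K] [Algebra k K] [AddCommGroup M] [Module K M]
  {ρ : (K ≃ₐ[k] K) → M ≃+ M}

theorem exists_fixingSubgroup_le_stabilizer (hρ : IsSmoothSemilinearAction ρ) (m : M) :
    ∃ E : IntermediateField k K, FiniteDimensional k E ∧ ∀ σ ∈ E.fixingSubgroup, ρ σ m = m := by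
  have h1 : (1 : K ≃ₐ[k] K) ∈ {σ | ρ σ m = m} := by simp [hρ.map_one]
  obtain ⟨E, hE, hfix⟩ := (krullTopology_mem_nhds_one_iff k K _).mp
    ((hρ.isOpen_stabilizer m).mem_nhds h1)
  exact ⟨E, hE, hfix⟩

theorem apply_smul_eq_of_inv_mul_mem_fixingSubgroup (hρ : IsSmoothSemilinearAction ρ)
    {E : IntermediateField k K} {m : M} (hm : ∀ σ ∈ E.fixingSubgroup, ρ σ m = m)
    {σ τ : K ≃ₐ[k] K} (h : σ⁻¹ * τ ∈ E.fixingSubgroup) (c : E) :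
    ρ τ ((c : K) • m) = ρ σ ((c : K) • m) := by
  have hc : (σ⁻¹ * τ) (c : K) = c := (mem_fixingSubgroup_iff E _).mp h c c.2
  calc ρ τ ((c : K) • m) = ρ (σ * (σ⁻¹ * τ)) ((c : K) • m) := by rw [mul_inv_cancel_left]
    _ = ρ σ ((c : K) • m) := by rw [hρ.map_mul, hρ.map_smul, hc, hm _ h]

theorem apply_sum_quotient_out_apply_smul (hρ : IsSmoothSemilinearAction ρ)
    {E : IntermediateField k K} [Fintype ((K ≃ₐ[k] K) ⧸ E.fixingSubgroup)] {m : M}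
    (hm : ∀ σ ∈ E.fixingSubgroup, ρ σ m = m) (c : E) (τ : K ≃ₐ[k] K) :
    ρ τ (∑ q : (K ≃ₐ[k] K) ⧸ E.fixingSubgroup, ρ q.out ((c : K) • m)) =
      ∑ q : (K ≃ₐ[k] K) ⧸ E.fixingSubgroup, ρ q.out ((c : K) • m) := by
  have hshift : ∀ q : (K ≃ₐ[k] K) ⧸ E.fixingSubgroup,
      ρ τ (ρ q.out ((c : K) • m)) = ρ (τ • q).out ((c : K) • m) := by
    intro q
    rw [← hρ.map_mul]
    refine hρ.apply_smul_eq_of_inv_mul_mem_fixingSubgroup hm (QuotientGroup.eq.mp ?_) c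
    rw [QuotientGroup.out_eq', ← MulAction.Quotient.mk_smul_out, smul_eq_mul]
  rw [map_sum, Fintype.sum_congr _ _ hshift]
  exact Equiv.sum_comp (MulAction.toPerm τ) fun q : (K ≃ₐ[k] K) ⧸ E.fixingSubgroup =>
    ρ q.out ((c : K) • m)

theorem mem_span_fixedPoints (hρ : IsSmoothSemilinearAction ρ) (m : M) :
    m ∈ span K {v : M | ∀ σ, ρ σ v = v} := by
  obtain ⟨E, _, hm⟩ := hρ.exists_fixingSubgroup_le_stabilizer m
  let _ := Fintype.ofFinite ((K ≃ₐ[k] K) ⧸ E.fixingSubgroup)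
  let q₀ : (K ≃ₐ[k] K) ⧸ E.fixingSubgroup := ↑(1 : K ≃ₐ[k] K)
  have hq₀ : ρ q₀.out m = m := by
    refine hm _ ?_
    simpa using QuotientGroup.eq.mp (QuotientGroup.out_eq' q₀).symm
  have hmem := mem_span_range_sum_smul_of_linearIndependent E.linearIndependent_quotient_out
    (fun q => ρ q.out m) q₀
  rw [hq₀] at hmem
  refine span_mono ?_ hmem
  rintro _ ⟨c, rfl⟩ τ
  simp_rw [← hρ.map_smul]
  exact hρ.apply_sum_quotient_out_apply_smul hm c τ

theorem exists_basis_isFixed (hρ : IsSmoothSemilinearAction ρ) :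
    ∃ (s : Set M) (b : Module.Basis s K M), ∀ i σ, ρ σ (b i) = b i := by
  obtain ⟨s, hs, hspan, hli⟩ := exists_linearIndependent K {v : M | ∀ σ, ρ σ v = v}
  refine ⟨s, Module.Basis.mk hli ?_, fun i σ => ?_⟩
  · rw [Subtype.range_coe, hspan]
    exact fun m _ => hρ.mem_span_fixedPoints m
  · simpa only [Module.Basis.mk_apply] using hs i.2 σ

def toSemilinearMap (hρ : IsSmoothSemilinearAction ρ) (σ : K ≃ₐ[k] K) :
    M →ₛₗ[(σ : K →+* K)] M where
  toFun := ρ σ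
  map_add' := map_add (ρ σ)
  map_smul' := hρ.map_smul σ

theorem exists_linearEquiv_intertwining {ρ' : (K ≃ₐ[k] K) → M ≃+ M}
    (hρ : IsSmoothSemilinearAction ρ) (hρ' : IsSmoothSemilinearAction ρ') :
    ∃ α : M ≃ₗ[K] M, ∀ σ m, α (ρ σ m) = ρ' σ (α m) := by
  obtain ⟨s, b, hb⟩ := hρ.exists_basis_isFixed
  obtain ⟨s', b', hb'⟩ := hρ'.exists_basis_isFixed
  let α := b.equiv b' (b.indexEquiv b')
  refine ⟨α, fun σ => ?_⟩
  have hcomm : (α : M →ₗ[K] M).comp (hρ.toSemilinearMap σ) =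
      (hρ'.toSemilinearMap σ).comp (α : M →ₗ[K] M) :=
    b.ext fun i => show α (ρ σ (b i)) = ρ' σ (α (b i)) by
      rw [hb, Module.Basis.equiv_apply, hb']
  exact LinearMap.congr_fun hcomm

theorem twist (hρ : IsSmoothSemilinearAction ρ) {δ : (K ≃ₐ[k] K) → M ≃ₗ[K] M}
    (hδ : ∀ σ τ m, δ (σ * τ) m = δ σ (ρ σ (δ τ ((ρ σ).symm m))))
    (hsmooth : ∀ m, IsOpen {σ | δ σ (ρ σ m) = m}) :
    IsSmoothSemilinearAction fun σ => (ρ σ).trans (δ σ).toAddEquiv where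
  map_one := by
    have hδ₁ : ∀ m, δ 1 m = m := fun m =>
      (δ 1).injective (by simpa [hρ.map_one] using (hδ 1 1 m).symm)
    ext m
    simp [hρ.map_one, hδ₁]
  map_mul σ τ m := by
    simp [hδ σ τ, hρ.map_mul]
  map_smul σ c m := by
    simp [hρ.map_smul]
  isOpen_stabilizer := hsmooth

end IsSmoothSemilinearAction

theorem smooth_one_cocycle_is_coboundary_general
    (k K : Type*) [Field k] [Field K] [Algebra k K]
    (M : Type*) [AddCommGroup M] [Module K M]
    (ρ : (K ≃ₐ[k] K) → M ≃+ M)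
    (hone : ρ 1 = AddEquiv.refl M)
    (hmul : ∀ (σ τ : K ≃ₐ[k] K) (m : M), ρ (σ * τ) m = ρ σ (ρ τ m))
    (hsemi : ∀ (σ : K ≃ₐ[k] K) (c : K) (m : M), ρ σ (c • m) = σ c • ρ σ m)
    (hsmooth : ∀ m : M, IsOpen {σ : K ≃ₐ[k] K | ρ σ m = m})
    (δ : (K ≃ₐ[k] K) → (M ≃ₗ[K] M))
    -- cocycle condition `δ(στ) = δ(σ) ∘ ^σδ(τ)` where `^σT = ρ σ ∘ T ∘ (ρ σ)⁻¹`
    (hcocycle : ∀ (σ τ : K ≃ₐ[k] K) (m : M),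
      δ (σ * τ) m = δ σ (ρ σ (δ τ ((ρ σ).symm m))))
    -- the twisted action `(σ, m) ↦ δ σ (ρ σ m)` is smooth
    (htwist : ∀ m : M, IsOpen {σ : K ≃ₐ[k] K | δ σ (ρ σ m) = m}) :
    ∃ α : M ≃ₗ[K] M, ∀ (σ : K ≃ₐ[k] K) (m : M),
      δ σ m = α.symm (ρ σ (α ((ρ σ).symm m))) := by
  have hρ : IsSmoothSemilinearAction ρ := ⟨hone, hmul, hsemi, hsmooth⟩
  obtain ⟨α, hα⟩ := (hρ.twist hcocycle htwist).exists_linearEquiv_intertwining hρ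
  refine ⟨α, fun σ m => ?_⟩
  rw [← hα]
  simp

/-- **Triviality of smooth 1-cocycles.** Let `K/k` be a Galois extension
with Galois group `G` (with the Krull topology), `M` a `K`-vector space with a smooth
semilinear `G`-action `ρ`, and `δ : G → GL_K(M)` a 1-cocycle (writing
`^σT = ρ σ ∘ T ∘ (ρ σ)⁻¹`, the cocycle condition is `δ(στ) = δ(σ) ∘ ^σδ(τ)`) such that
the twisted action `(σ, m) ↦ δ σ (ρ σ m)` is smooth.  Then there is `α ∈ GL_K(M)` with
`δ(σ) = α⁻¹ ∘ ^σα` for every `σ ∈ G`. -/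
theorem smooth_one_cocycle_is_coboundary
    (k K : Type*) [Field k] [Field K] [Algebra k K] [IsGalois k K]
    (M : Type*) [AddCommGroup M] [Module K M]
    (ρ : (K ≃ₐ[k] K) → M ≃+ M)
    (hone : ρ 1 = AddEquiv.refl M)
    (hmul : ∀ (σ τ : K ≃ₐ[k] K) (m : M), ρ (σ * τ) m = ρ σ (ρ τ m))
    (hsemi : ∀ (σ : K ≃ₐ[k] K) (c : K) (m : M), ρ σ (c • m) = σ c • ρ σ m)
    (hsmooth : ∀ m : M, IsOpen {σ : K ≃ₐ[k] K | ρ σ m = m})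
    (δ : (K ≃ₐ[k] K) → (M ≃ₗ[K] M))
    -- cocycle condition `δ(στ) = δ(σ) ∘ ^σδ(τ)` where `^σT = ρ σ ∘ T ∘ (ρ σ)⁻¹`
    (hcocycle : ∀ (σ τ : K ≃ₐ[k] K) (m : M),
      δ (σ * τ) m = δ σ (ρ σ (δ τ ((ρ σ).symm m))))
    -- the twisted action `(σ, m) ↦ δ σ (ρ σ m)` is smooth
    (htwist : ∀ m : M, IsOpen {σ : K ≃ₐ[k] K | δ σ (ρ σ m) = m}) :
    ∃ α : M ≃ₗ[K] M, ∀ (σ : K ≃ₐ[k] K) (m : M),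
      δ σ m = α.symm (ρ σ (α ((ρ σ).symm m))) :=
  smooth_one_cocycle_is_coboundary_general k K M ρ hone hmul hsemi hsmooth δ hcocycle htwist
end

section
/- Let p be an odd prime, set p* = (−1)^{(p−1)/2} p, and let ζ be a primitive p-th root of unity in ℂ. Then a square root of p* lies in ℚ(ζ), and for every σ ∈ Gal(ℚ(ζ)/ℚ), if r is an integer coprime to p with σ(ζ) = ζ^r, then σ fixes √p* if and only if r is a quadratic residue modulo p. -/
open IntermediateField

/-- Let `p` be an odd prime, `p* = (-1)^((p-1)/2) * p`, and `ζ` a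
primitive `p`-th root of unity in `ℂ`.  Then a square root `s` of `p*` lies in `ℚ(ζ)`,
and for every `σ ∈ Gal(ℚ(ζ)/ℚ)`, if `r` is an integer coprime to `p` with `σ ζ = ζ^r`,
then `σ` fixes `s` if and only if `r` is a quadratic residue mod `p`. -/
theorem galois_fixes_sqrt_pstar_iff_quadratic_residue
    (p : ℕ) (hp : p.Prime) (hodd : Odd p)
    (ζ : ℂ) (hζ : IsPrimitiveRoot ζ p)
    (hζmem : ζ ∈ adjoin ℚ ({ζ} : Set ℂ)) :
    ∃ s : ℂ, s ^ 2 = (-1 : ℂ) ^ ((p - 1) / 2) * p ∧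
      ∃ hs : s ∈ adjoin ℚ ({ζ} : Set ℂ),
        ∀ (σ : adjoin ℚ ({ζ} : Set ℂ) ≃ₐ[ℚ] adjoin ℚ ({ζ} : Set ℂ)) (r : ℤ),
          IsCoprime r (p : ℤ) →
          σ ⟨ζ, hζmem⟩ = (⟨ζ, hζmem⟩ : adjoin ℚ ({ζ} : Set ℂ)) ^ r →
          (σ ⟨s, hs⟩ = ⟨s, hs⟩ ↔ IsSquare (r : ZMod p)) := by
  haveI : Fact p.Prime := ⟨hp⟩
  haveI : NeZero p := ⟨hp.ne_zero⟩
  have hp2 : p ≠ 2 := fun h => by rw [h] at hodd; exact (Nat.not_odd_iff_even.mpr even_two) hodd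
  have hchar : ringChar (ZMod p) ≠ 2 := by
    rw [ZMod.ringChar_zmod_n]; exact hp2
  set K := adjoin ℚ ({ζ} : Set ℂ) with hK
  set z : K := (⟨ζ, hζmem⟩ : K) with hzdef
  have hz : IsPrimitiveRoot z p := IsPrimitiveRoot.coe_submonoidClass_iff.mp hζ
  have hz1 : z ^ p = 1 := hz.pow_eq_one
  set ψ : AddChar (ZMod p) K := AddChar.zmodChar p hz1 with hψdef
  set χ : MulChar (ZMod p) K :=
    (quadraticChar (ZMod p)).ringHomComp (Int.castRingHom K) with hχdef
  have hχ1 : χ ≠ 1 :=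
    (MulChar.ringHomComp_eq_one_iff Int.cast_injective).not.mpr
      (quadraticChar_ne_one hchar)
  have hχ2 : χ.IsQuadratic := (quadraticChar_isQuadratic _).comp _
  have hψprim : ψ.IsPrimitive := AddChar.zmodChar_primitive_of_primitive_root p hz
  set S : K := gaussSum χ ψ with hSdef
  -- value of χ (-1)
  have hχneg : χ (-1) = ((-1 : K) ^ ((p - 1) / 2)) := by
    have h1 : quadraticChar (ZMod p) (-1) = ZMod.χ₄ (Fintype.card (ZMod p)) :=
      quadraticChar_neg_one hchar
    rw [ZMod.card] at h1
    have h2 : ZMod.χ₄ p = (-1 : ℤ) ^ (p / 2) := ZMod.χ₄_eq_neg_one_pow (Nat.odd_iff.mp hodd)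
    have h3 : p / 2 = (p - 1) / 2 := by
      obtain ⟨k, rfl⟩ := hodd; omega
    have : χ (-1) = ((quadraticChar (ZMod p) (-1) : ℤ) : K) := rfl
    rw [this, h1, h2, h3]
    push_cast
    ring
  have hS2 : S ^ 2 = (-1 : K) ^ ((p - 1) / 2) * p := by
    rw [hSdef, gaussSum_sq hχ1 hχ2 hψprim, ZMod.card, hχneg]
  have hpK : ((Fintype.card (ZMod p) : K)) ≠ 0 := by
    rw [ZMod.card]; exact_mod_cast hp.ne_zero
  have hSne : S ≠ 0 := gaussSum_ne_zero_of_nontrivial hpK hχ1 hψprim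
  have hz0 : z ≠ 0 := hz.ne_zero hp.ne_zero
  -- z ^ m = ψ m for integer m
  have zaux : ∀ m : ℤ, z ^ m = ψ ((m : ZMod p)) := by
    intro m
    have hval : (((((m : ZMod p).val : ℤ)) : ZMod p)) = (m : ZMod p) := by
      simp [ZMod.natCast_val, ZMod.intCast_cast, ZMod.intCast_zmod_cast]
    have hdvd : (p : ℤ) ∣ m - (((m : ZMod p).val : ℤ)) := by
      have : ((m - (((m : ZMod p).val : ℤ)) : ℤ) : ZMod p) = 0 := by
        push_cast [hval]; ring
      exact_mod_cast (ZMod.intCast_zmod_eq_zero_iff_dvd _ p).mp this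
    obtain ⟨c, hc⟩ := hdvd
    have hm : m = (((m : ZMod p).val : ℤ)) + (p : ℤ) * c := by linarith
    calc z ^ m = z ^ ((((m : ZMod p).val : ℤ)) + (p : ℤ) * c) := by rw [← hm]
      _ = z ^ ((m : ZMod p).val) := by
            rw [zpow_add₀ hz0, zpow_mul, zpow_natCast, zpow_natCast, hz1, one_zpow, mul_one]
      _ = ψ ((m : ZMod p)) := (AddChar.zmodChar_apply hz1 _).symm
  refine ⟨(S : ℂ), ?_, S.2, ?_⟩
  · have h := congrArg (Subtype.val) hS2
    push_cast at h
    convert h using 2 <;> norm_num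
  · intro σ r hcop hσζ
    have hSeta : (⟨(S : ℂ), S.2⟩ : K) = S := rfl
    rw [hSeta]
    -- the image of r in ZMod p is a unit
    have hur : IsUnit ((r : ZMod p)) := by
      have := hcop.map (Int.castRingHom (ZMod p))
      simp only [Int.coe_castRingHom, Int.cast_natCast, ZMod.natCast_self] at this
      exact isCoprime_zero_right.mp this
    set u : (ZMod p)ˣ := hur.unit with hudef
    have huspec : (u : ZMod p) = (r : ZMod p) := hur.unit_spec
    have hru0 : (r : ZMod p) ≠ 0 := huspec ▸ u.ne_zero
    -- σ acts on the Gauss sum by multiplying arguments by r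
    have hσS : σ S = gaussSum χ (AddChar.mulShift ψ (u : ZMod p)) := by
      rw [hSdef, gaussSum, gaussSum, map_sum]
      refine Finset.sum_congr rfl fun a _ => ?_
      have hχa : σ (χ a) = χ a := by
        show σ (((quadraticChar (ZMod p) a : ℤ) : K)) = _
        rw [map_intCast]; rfl
      rw [map_mul, hχa]
      congr 1
      have hψa : ψ a = z ^ (a.val) := AddChar.zmodChar_apply hz1 a
      rw [hψa, map_pow, hσζ, ← zpow_natCast (z ^ r), ← zpow_mul, zaux,
        AddChar.mulShift_apply, huspec]
      congr 1
      push_cast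
      simp [ZMod.natCast_val, ZMod.intCast_cast, ZMod.intCast_zmod_cast]
    have hkey : χ (u : ZMod p) * σ S = S := by
      rw [hσS, hSdef]
      exact gaussSum_mulShift χ ψ u
    constructor
    · intro hfix
      rw [hfix] at hkey
      have hχu1 : χ (u : ZMod p) = 1 := by
        have := mul_right_cancel₀ hSne (hkey.trans (one_mul S).symm)
        exact this
      rw [hχdef, MulChar.ringHomComp_apply, huspec] at hχu1
      have hq1 : quadraticChar (ZMod p) ((r : ZMod p)) = 1 := by
        have h1 : ((quadraticChar (ZMod p) ((r : ZMod p)) : ℤ) : K) = ((1 : ℤ) : K) := by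
          simpa using hχu1
        exact_mod_cast h1
      exact (quadraticChar_one_iff_isSquare hru0).mp hq1
    · intro hsq
      have hq1 : quadraticChar (ZMod p) ((r : ZMod p)) = 1 :=
        (quadraticChar_one_iff_isSquare hru0).mpr hsq
      have hχu1 : χ (u : ZMod p) = 1 := by
        rw [hχdef, MulChar.ringHomComp_apply, huspec, hq1]
        simp
      rw [hχu1, one_mul] at hkey
      exact hkey
end
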